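/- Fix a positive integer k. The coherent states ξ_{(x,y)} on V_k ≅ ℂ^k defined by ξ_{(x,y)}(m) = (2/k)^{1/4} e^{−ikxy/(4π)} Σ_{n∈ℤ} e^{−(k/(4π))(2πm/k − 2πn − x)²} e^{−(ik/(2π)) y (2πm/k − 2πn − x)} satisfy the over-completeness relation (k/(4π²)) ∫_{[0,2π)²} ξ_{(x,y)}(m) · conj(ξ_{(x,y)}(m')) dx dy = δ_{m,m'} for all m, m' ∈ ℤ/kℤ. -/

import Mathlib

open Real MeasureTheory

/-- A single term of the coherent-state series on `V_k`. -/
noncomputable def xiTerm (k : ℕ) (x y : ℝ) (m : ZMod k) (n : ℤ) : ℂ :=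
  ((Real.exp (-(k / (4 * π)) * (2 * π * (m.val : ℝ) / k - 2 * π * n - x) ^ 2) : ℝ) : ℂ) *
    Complex.exp (-Complex.I * ((k : ℂ) / (2 * π)) * (y : ℂ) *
      ((2 * π * (m.val : ℝ) / k - 2 * π * n - x : ℝ) : ℂ))

/-- The coherent state `ξ_{(x,y)}(m)` on `V_k ≅ ℂ^k`. -/
noncomputable def xi (k : ℕ) (x y : ℝ) (m : ZMod k) : ℂ :=
  (((2 / (k : ℝ)) ^ ((1 : ℝ) / 4) : ℝ) : ℂ) *
    Complex.exp (-Complex.I * (k : ℂ) * (x : ℂ) * (y : ℂ) / (4 * π)) *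
    ∑' n : ℤ, xiTerm k x y m n

/-
Expanding `ξ(m) · conj ξ(m')` as a double series over `(n, n') ∈ ℤ²`, each term is a Gaussian
weight in `x` times the character `e^{-i r y}` with integer frequency `r = (m - m') - k (n - n')`.
Integrating over `y ∈ [0, 2π)` kills every term with `r ≠ 0`, and `r = 0` forces `m = m'` and
`n = n'` since `|m - m'| < k`. What is left is `∫₀^{2π} ∑ₙ e^{-(k/2π)(x + 2πn - 2πm/k)²} dx`,
the periodization of a Gaussian, which unfolds to the full Gaussian integral `π √(2/k)`.
-/

open Set

section Periodization

variable {E : Type*} [NormedAddCommGroup E] [NormedSpace ℝ E]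

lemma hasSum_integral_Ico_comp_add_zsmul {f : ℝ → E} (hf : Integrable f) {T : ℝ} (hT : 0 < T)
    (t : ℝ) : HasSum (fun n : ℤ => ∫ x in Ico t (t + T), f (x + n • T)) (∫ x, f x) := by
  have hsum := hasSum_integral_iUnion (fun _ => measurableSet_Ico)
    (pairwise_disjoint_Ico_add_zsmul t T) hf.integrableOn
  rw [iUnion_Ico_add_zsmul hT t, setIntegral_univ] at hsum
  refine hsum.congr_fun fun n => ?_
  have hshift : Ico t (t + T) = (· + n • T) ⁻¹' Ico (t + n • T) (t + (n + 1) • T) := by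
    rw [preimage_add_const_Ico, add_smul, one_smul]
    congr 1 <;> abel
  rw [hshift]
  exact (measurePreserving_add_right volume _).setIntegral_preimage_emb
    (measurableEmbedding_addRight _) f _

lemma integral_Ico_tsum_comp_add_zsmul {f : ℝ → E} (hf : Integrable f) {T : ℝ} (hT : 0 < T)
    (t : ℝ) : ∫ x in Ico t (t + T), ∑' n : ℤ, f (x + n • T) = ∫ x, f x := by
  rw [← integral_tsum_of_summable_integral_norm
    (fun n => (hf.comp_add_right (n • T)).integrableOn)
    (hasSum_integral_Ico_comp_add_zsmul hf.norm hT t).summable]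
  exact (hasSum_integral_Ico_comp_add_zsmul hf hT t).tsum_eq

end Periodization

lemma summable_exp_neg_mul_sq_sub_mul_int {q : ℝ} (hq : 0 < q) (a : ℝ) {T : ℝ} (hT : T ≠ 0) :
    Summable fun n : ℤ => rexp (-q * (a - T * n) ^ 2) := by
  have hτ : 0 < (Complex.I * ((q * T ^ 2 / π : ℝ) : ℂ)).im := by
    simp only [Complex.I_mul_im, Complex.ofReal_re]; positivity
  refine (((summable_jacobiTheta₂_term_iff (Complex.I * ((-(q * a * T / π) : ℝ) : ℂ)) _).mpr
    hτ).norm.mul_left (rexp (-q * a ^ 2))).congr fun n => ?_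
  simp only [norm_jacobiTheta₂_term, Complex.I_mul_im, Complex.ofReal_re, ← Real.exp_add]
  congr 1
  field_simp
  ring

lemma integral_Ico_cexp_neg_I_int_mul (r : ℤ) :
    ∫ y in Ico 0 (2 * π), Complex.exp (-Complex.I * r * y) =
      if r = 0 then ((2 * π : ℝ) : ℂ) else 0 := by
  rw [integral_Ico_eq_integral_Ioo, ← integral_Ioc_eq_integral_Ioo,
    ← intervalIntegral.integral_of_le two_pi_pos.le]
  split_ifs with hr
  · simp [hr]
  · have hc : -Complex.I * r ≠ 0 := by simp [hr, Complex.I_ne_zero]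
    rw [integral_exp_mul_complex hc]
    have : -Complex.I * r * ((2 * π : ℝ) : ℂ) = ((-r : ℤ) : ℂ) * (2 * π * Complex.I) := by
      push_cast; ring
    rw [this, Complex.exp_int_mul_two_pi_mul_I]
    simp

lemma integral_Ico_tsum_mul_cexp {ι : Type*} [Countable ι] {a : ι → ℂ}
    (ha : Summable fun i => ‖a i‖) (r : ι → ℤ) :
    ∫ y in Ico 0 (2 * π), ∑' i, a i * Complex.exp (-Complex.I * r i * y) =
      ((2 * π : ℝ) : ℂ) * ∑' i, if r i = 0 then a i else 0 := by
  have hnorm : ∀ i, ∫ y in Ico 0 (2 * π), ‖a i * Complex.exp (-Complex.I * r i * y)‖ =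
      2 * π * ‖a i‖ := by
    intro i
    have hunit : ∀ y : ℝ, ‖Complex.exp (-Complex.I * r i * y)‖ = 1 := fun y => by
      rw [show -Complex.I * r i * y = ((-(r i * y) : ℝ) : ℂ) * Complex.I by push_cast; ring]
      exact Complex.norm_exp_ofReal_mul_I _
    simp only [norm_mul, hunit, mul_one, setIntegral_const,
      Real.volume_real_Ico_of_le two_pi_pos.le, sub_zero, smul_eq_mul]
  rw [← integral_tsum_of_summable_integral_norm
    (fun i => (by fun_prop : Continuous _).integrableOn_Icc.mono_set Ico_subset_Icc_self)
    (by simpa only [hnorm] using ha.mul_left (2 * π))]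
  simp_rw [integral_const_mul, integral_Ico_cexp_neg_I_int_mul, ← tsum_mul_left]
  congr 1 with i
  split_ifs <;> simp [mul_comm]

lemma tsum_prod_ite_fst_eq_snd {ι M : Type*} [AddCommMonoid M] [TopologicalSpace M]
    [DecidableEq ι] (f : ι × ι → M) :
    ∑' p : ι × ι, (if p.1 = p.2 then f p else 0) = ∑' i, f (i, i) := by
  have hsupp : Function.support (fun p : ι × ι => if p.1 = p.2 then f p else 0) ⊆
      range fun i => (i, i) := by
    rintro ⟨i, j⟩ hp
    by_cases h : i = j
    · exact ⟨i, by rw [h]⟩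
    · exact absurd (if_neg h) hp
  rw [← Function.Injective.tsum_eq (fun i j h => (Prod.ext_iff.1 h).1) hsupp]
  simp

noncomputable def xiOffset (k : ℕ) (m : ZMod k) (n : ℤ) (x : ℝ) : ℝ :=
  2 * π * (m.val : ℝ) / k - 2 * π * n - x

noncomputable def xiWeight (k : ℕ) (m : ZMod k) (n : ℤ) (x : ℝ) : ℝ :=
  rexp (-(k / (4 * π)) * xiOffset k m n x ^ 2)

def xiFreq (k : ℕ) (m m' : ZMod k) (n n' : ℤ) : ℤ :=
  ((m.val : ℤ) - m'.val) - k * (n - n')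

section CoherentState

variable {k : ℕ}

lemma xiWeight_pos (m : ZMod k) (n : ℤ) (x : ℝ) : 0 < xiWeight k m n x :=
  Real.exp_pos _

lemma xiTerm_eq (x y : ℝ) (m : ZMod k) (n : ℤ) :
    xiTerm k x y m n = (xiWeight k m n x : ℂ) *
      Complex.exp (-Complex.I * ((k : ℂ) / (2 * π)) * y * (xiOffset k m n x : ℂ)) :=
  rfl

lemma norm_ofReal_xiWeight (m : ZMod k) (n : ℤ) (x : ℝ) :
    ‖(xiWeight k m n x : ℂ)‖ = xiWeight k m n x := by
  rw [Complex.norm_real, Real.norm_of_nonneg (xiWeight_pos m n x).le]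

lemma norm_xiTerm (x y : ℝ) (m : ZMod k) (n : ℤ) : ‖xiTerm k x y m n‖ = xiWeight k m n x := by
  rw [xiTerm_eq, norm_mul, norm_ofReal_xiWeight,
    show -Complex.I * ((k : ℂ) / (2 * π)) * y * (xiOffset k m n x : ℂ)
      = ((-(k / (2 * π) * y * xiOffset k m n x) : ℝ) : ℂ) * Complex.I by push_cast; ring,
    Complex.norm_exp_ofReal_mul_I, mul_one]

lemma summable_xiWeight [NeZero k] (m : ZMod k) (x : ℝ) : Summable (xiWeight k m · x) := by
  refine (summable_exp_neg_mul_sq_sub_mul_int (q := k / (4 * π))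
    (div_pos (Nat.cast_pos.2 (NeZero.pos k)) (by positivity))
    (2 * π * m.val / k - x) two_pi_pos.ne').congr fun n => ?_
  simp only [xiWeight, xiOffset]
  ring_nf

lemma xiTerm_mul_conj_xiTerm [NeZero k] (x y : ℝ) (m m' : ZMod k) (n n' : ℤ) :
    xiTerm k x y m n * (starRingEnd ℂ) (xiTerm k x y m' n') =
      (xiWeight k m n x : ℂ) * (xiWeight k m' n' x : ℂ) *
        Complex.exp (-Complex.I * xiFreq k m m' n n' * y) := by
  have hfreq :
      (k : ℂ) / (2 * π) * (xiOffset k m n x - xiOffset k m' n' x) = xiFreq k m m' n n' := by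
    have hk : (k : ℂ) ≠ 0 := Nat.cast_ne_zero.2 (NeZero.ne k)
    simp only [xiOffset, xiFreq]
    push_cast
    field_simp
    ring
  simp only [xiTerm_eq, map_mul, Complex.conj_ofReal, ← Complex.exp_conj, map_neg, Complex.conj_I,
    map_div₀, map_natCast, map_ofNat]
  rw [mul_mul_mul_comm, ← Complex.exp_add]
  congr 2
  linear_combination (-Complex.I * y) * hfreq

lemma xiFreq_eq_zero_iff [NeZero k] {m m' : ZMod k} {n n' : ℤ} :
    xiFreq k m m' n n' = 0 ↔ m = m' ∧ n = n' := by
  refine ⟨fun h => ?_, fun ⟨hm, hn⟩ => by simp [xiFreq, hm, hn]⟩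
  have hval : (m.val : ℤ) - m'.val = 0 := by
    refine Int.eq_zero_of_abs_lt_dvd
      (show (k : ℤ) ∣ (m.val : ℤ) - m'.val from ⟨n - n', by rw [xiFreq] at h; linarith⟩) ?_
    have := m.val_lt
    have := m'.val_lt
    rw [abs_lt]
    omega
  have hm : m = m' := ZMod.val_injective k (by omega)
  refine ⟨hm, ?_⟩
  rw [xiFreq, hval, zero_sub, neg_eq_zero, mul_eq_zero, sub_eq_zero] at h
  exact h.resolve_left (Nat.cast_ne_zero.2 (NeZero.ne k))

lemma xi_mul_conj_xi [NeZero k] (x y : ℝ) (m m' : ZMod k) :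
    xi k x y m * (starRingEnd ℂ) (xi k x y m') =
      (√(2 / k) : ℂ) * ∑' p : ℤ × ℤ, (xiWeight k m p.1 x : ℂ) * (xiWeight k m' p.2 x : ℂ) *
        Complex.exp (-Complex.I * xiFreq k m m' p.1 p.2 * y) := by
  set φ : ℂ := -Complex.I * (k : ℂ) * (x : ℂ) * (y : ℂ) / (4 * π)
  have hphase : Complex.exp φ * (starRingEnd ℂ) (Complex.exp φ) = 1 := by
    rw [← Complex.exp_conj, ← Complex.exp_add, ← Complex.exp_zero]
    congr 1
    simp only [φ, map_div₀, map_mul, map_neg, Complex.conj_I, map_natCast, Complex.conj_ofReal,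
      map_ofNat]
    ring
  set c : ℝ := (2 / (k : ℝ)) ^ ((1 : ℝ) / 4) with hc
  have hamp : c * c = √(2 / k) := by
    have hk : (0 : ℝ) < k := Nat.cast_pos.2 (NeZero.pos k)
    rw [hc, ← Real.rpow_add (by positivity), Real.sqrt_eq_rpow]
    norm_num
  have hprod := tsum_mul_tsum_of_summable_norm (f := xiTerm k x y m)
    (g := fun n => (starRingEnd ℂ) (xiTerm k x y m' n))
    (by simpa only [norm_xiTerm] using summable_xiWeight m x)
    (by simpa only [RCLike.norm_conj, norm_xiTerm] using summable_xiWeight m' x)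
  simp only [xiTerm_mul_conj_xiTerm] at hprod
  rw [← hprod, xi, xi, map_mul, map_mul, Complex.conj_ofReal, Complex.conj_tsum, ← hamp,
    Complex.ofReal_mul]
  linear_combination (c : ℂ) * c * (∑' n, xiTerm k x y m n) *
    (∑' n, (starRingEnd ℂ) (xiTerm k x y m' n)) * hphase

lemma integral_xi_mul_conj_xi [NeZero k] (x : ℝ) (m m' : ZMod k) :
    ∫ y in Ico 0 (2 * π), xi k x y m * (starRingEnd ℂ) (xi k x y m') =
      if m = m' then ((√(2 / k) * (2 * π) : ℝ) : ℂ) * ∑' n, ((xiWeight k m n x ^ 2 : ℝ) : ℂ)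
      else 0 := by
  have hsum :
      Summable fun p : ℤ × ℤ => ‖(xiWeight k m p.1 x : ℂ) * (xiWeight k m' p.2 x : ℂ)‖ :=
    Summable.mul_norm (f := fun n => (xiWeight k m n x : ℂ))
      (g := fun n => (xiWeight k m' n x : ℂ))
      (by simpa only [norm_ofReal_xiWeight] using summable_xiWeight m x)
      (by simpa only [norm_ofReal_xiWeight] using summable_xiWeight m' x)
  simp_rw [xi_mul_conj_xi]
  rw [integral_const_mul, integral_Ico_tsum_mul_cexp hsum]
  simp only [xiFreq_eq_zero_iff]
  split_ifs with hm
  · subst hm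
    simp only [true_and, tsum_prod_ite_fst_eq_snd, ← sq]
    push_cast
    ring
  · simp [hm]

lemma integral_Ico_tsum_xiWeight_sq [NeZero k] (m : ZMod k) :
    ∫ x in Ico 0 (2 * π), ∑' n, ((xiWeight k m n x ^ 2 : ℝ) : ℂ) = ((π * √(2 / k) : ℝ) : ℂ) := by
  have hk : (0 : ℝ) < k := Nat.cast_pos.2 (NeZero.pos k)
  have hsq : ∀ n x, xiWeight k m n x ^ 2 =
      rexp (-(k / (2 * π)) * ((x + n • (2 * π)) - 2 * π * m.val / k) ^ 2) := by
    intro n x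
    rw [xiWeight, ← Real.exp_nat_mul, xiOffset, zsmul_eq_mul]
    congr 1
    field_simp
    ring
  have hf : Integrable fun u : ℝ =>
      ((rexp (-(k / (2 * π)) * (u - 2 * π * m.val / k) ^ 2) : ℝ) : ℂ) :=
    ((integrable_exp_neg_mul_sq (by positivity)).comp_sub_right _).ofReal
  have hper := integral_Ico_tsum_comp_add_zsmul hf two_pi_pos 0
  rw [zero_add] at hper
  simp only [hsq, hper]
  rw [integral_complex_ofReal,
    integral_sub_right_eq_self (fun u => rexp (-(k / (2 * π)) * u ^ 2)), integral_gaussian]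
  congr 1
  rw [show π / (k / (2 * π)) = π ^ 2 * (2 / k) by field_simp, Real.sqrt_mul (sq_nonneg π),
    Real.sqrt_sq pi_pos.le]

end CoherentState

theorem xi_overcompleteness (k : ℕ) (hk : 0 < k) (m m' : ZMod k) :
    ((k : ℂ) / (4 * π ^ 2)) *
        ∫ x in Set.Ico (0 : ℝ) (2 * π), ∫ y in Set.Ico (0 : ℝ) (2 * π),
          xi k x y m * (starRingEnd ℂ) (xi k x y m')
      = if m = m' then 1 else 0 := by
  have : NeZero k := NeZero.of_pos hk
  simp_rw [integral_xi_mul_conj_xi]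
  by_cases hm : m = m'
  · subst hm
    simp only [if_true]
    rw [integral_const_mul, integral_Ico_tsum_xiWeight_sq]
    have hk' : (k : ℝ) ≠ 0 := Nat.cast_ne_zero.2 hk.ne'
    have hconst : (k : ℝ) / (4 * π ^ 2) * ((√(2 / k) * (2 * π)) * (π * √(2 / k))) = 1 := by
      rw [show (k : ℝ) / (4 * π ^ 2) * ((√(2 / k) * (2 * π)) * (π * √(2 / k)))
        = k / (4 * π ^ 2) * (2 * π ^ 2) * (√(2 / k) * √(2 / k)) by ring,
        Real.mul_self_sqrt (by positivity)]
      field_simp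
      norm_num
    exact_mod_cast hconst
  · simp [hm]
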